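/- arXiv:0904.0787 — 2 statements merged into one kernel-verified Lean document; each statement's English description precedes it below -/
import Mathlib

section
/- In the universal enveloping algebra of sl_2 over ℚ, for every k ≥ 0, the element (e^k/k!) · (f^k/k!) is congruent, modulo the left ideal generated by e, to the binomial expression binom(h, k) := h(h−1)⋯(h−k+1)/k!. -/
/-!
Write `E, F, H` for the images of `e, f, h` in the enveloping algebra. From `[E, F] = H` and
`[H, F] = -2F` one gets `E F^(k+1) = F^(k+1) E + (k+1) F^k (H - k)`, and from `[H, E] = 2E` one gets
`E (H - n) = (H - n - 2) E`, so right multiplication by `H - n` preserves the left ideal generated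
by `E`. Induction on `k` then gives `E^k F^k ≡ k! H (H - 1) ⋯ (H - k + 1)` modulo that ideal.
-/

section CommutatorRelations

variable {A : Type*} [Ring A] {e f h : A}

theorem sub_natCast_mul_eq_mul_sub (hhf : h * f - f * h = -(2 • f)) (n : ℕ) :
    (h - n) * f = f * (h - (n + 2)) := by
  rw [sub_eq_iff_eq_add] at hhf
  rw [sub_mul, hhf, mul_sub, (Nat.cast_commute n f).eq, mul_add, mul_two]
  abel

theorem mul_sub_natCast_eq_sub_mul (hhe : h * e - e * h = 2 • e) (n : ℕ) :
    e * (h - n) = (h - (n + 2)) * e := by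
  rw [sub_eq_iff_eq_add] at hhe
  rw [sub_mul, hhe, mul_sub, ← (Nat.cast_commute n e).eq, add_mul, two_mul, two_nsmul]
  abel

theorem mul_pow_succ_eq_pow_succ_mul_add (hef : e * f - f * e = h)
    (hhf : h * f - f * h = -(2 • f)) (k : ℕ) :
    e * f ^ (k + 1) = f ^ (k + 1) * e + (k + 1) • (f ^ k * (h - k)) := by
  rw [sub_eq_iff_eq_add'] at hef
  induction k with
  | zero => simpa using hef
  | succ k ih =>
    rw [pow_succ f (k + 1), ← mul_assoc, ih, add_mul, mul_assoc, smul_mul_assoc, mul_assoc,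
      sub_natCast_mul_eq_mul_sub hhf, hef, ← mul_assoc, ← pow_succ]
    push_cast
    simp only [mul_add, mul_sub, ← nsmul_eq_mul', mul_one, mul_two, ← mul_assoc, ← pow_succ]
    module

theorem Ideal.mul_mem_span_singleton_of_mul_mem {R : Type*} [Semiring R] {e c x : R}
    (hc : e * c ∈ Ideal.span {e}) (hx : x ∈ Ideal.span {e}) : x * c ∈ Ideal.span {e} := by
  obtain ⟨u, rfl⟩ := Ideal.mem_span_singleton'.mp hx
  rw [mul_assoc]
  exact Ideal.mul_mem_left _ u hc

theorem pow_mul_pow_sub_factorial_smul_prod_mem_span_singleton (hef : e * f - f * e = h)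
    (hhe : h * e - e * h = 2 • e) (hhf : h * f - f * h = -(2 • f)) (k : ℕ) :
    e ^ k * f ^ k - k.factorial • ((List.range k).map fun i : ℕ => h - i).prod ∈
      Ideal.span {e} := by
  induction k with
  | zero => simp
  | succ k ih =>
    set P := ((List.range k).map fun i : ℕ => h - i).prod
    have hP : ((List.range (k + 1)).map fun i : ℕ => h - i).prod = P * (h - k) := by
      simp [P, List.range_succ]
    have hshift : e * (h - k) ∈ Ideal.span {e} := by
      rw [mul_sub_natCast_eq_sub_mul hhe]
      exact Ideal.mul_mem_left _ _ (Ideal.mem_span_singleton_self e)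
    have hsplit : e ^ (k + 1) * f ^ (k + 1) - (k + 1).factorial • (P * (h - k)) =
        e ^ k * f ^ (k + 1) * e + (k + 1) • ((e ^ k * f ^ k - k.factorial • P) * (h - k)) := by
      rw [pow_succ e k, mul_assoc, mul_assoc, mul_pow_succ_eq_pow_succ_mul_add hef hhf,
        Nat.factorial_succ, mul_smul]
      simp only [mul_add, sub_mul, smul_sub, mul_smul_comm, smul_mul_assoc, mul_assoc]
      abel
    rw [hP, hsplit]
    exact add_mem (Ideal.mul_mem_left _ _ (Ideal.mem_span_singleton_self e))
      (nsmul_mem (Ideal.mul_mem_span_singleton_of_mul_mem hshift ih) _)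

end CommutatorRelations

open LieAlgebra.SpecialLinear UniversalEnvelopingAlgebra

attribute [local instance] LieRing.ofAssociativeRing

/-- In U(sl_2(ℚ)): `(e^k/k!)·(f^k/k!) ≡ binom(h,k) = h(h−1)⋯(h−k+1)/k!` modulo the
left ideal generated by `e`. -/
theorem stmt_5 (k : ℕ)
    (e f h : LieAlgebra.SpecialLinear.sl (Fin 2) ℚ)
    (he : e = LieAlgebra.SpecialLinear.single 0 1 (by decide) (1 : ℚ))
    (hf : f = LieAlgebra.SpecialLinear.single 1 0 (by decide) (1 : ℚ))
    (hh : h = ⟨Matrix.single 0 0 (1 : ℚ) - Matrix.single 1 1 (1 : ℚ), by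
      show _ ∈ LinearMap.ker (Matrix.traceLinearMap (Fin 2) ℚ ℚ)
      rw [LinearMap.mem_ker]; simp [Matrix.trace, Fin.sum_univ_two, Matrix.single]⟩) :
    ((k.factorial : ℚ)⁻¹ • (ι (R := ℚ) e) ^ k) * ((k.factorial : ℚ)⁻¹ • (ι (R := ℚ) f) ^ k) -
      (k.factorial : ℚ)⁻¹ •
        (((List.range k).map (fun i => ι (R := ℚ) h - (i : ℚ) • 1)).prod)
      ∈ Ideal.span {ι (R := ℚ) e} := by
  have hsl2 : ⁅e, f⁆ = h ∧ ⁅h, e⁆ = 2 • e ∧ ⁅h, f⁆ = -(2 • f) := by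
    subst he hf hh
    refine ⟨?_, ?_, ?_⟩ <;> ext i j <;> fin_cases i <;> fin_cases j <;>
      simp [Ring.lie_def, Matrix.mul_apply, Matrix.single] <;> norm_num
  obtain ⟨hef, hhe, hhf⟩ := hsl2
  have hmem := pow_mul_pow_sub_factorial_smul_prod_mem_span_singleton
    (e := ι ℚ e) (f := ι ℚ f) (h := ι ℚ h)
    (by rw [← Ring.lie_def, ← LieHom.map_lie, hef])
    (by rw [← Ring.lie_def, ← LieHom.map_lie, hhe, map_nsmul])
    (by rw [← Ring.lie_def, ← LieHom.map_lie, hhf, map_neg, map_nsmul]) k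
  -- `(i : ℚ)` in the statement makes Lean coerce `List.range k` itself to `List ℚ` (via bind).
  have hprod : ((List.range k).map (fun i => ι (R := ℚ) h - (i : ℚ) • 1)).prod =
      ((List.range k).map fun i : ℕ => ι ℚ h - i).prod := by
    simp only [List.bind_eq_flatMap, ← Function.comp_def pure, List.flatMap_pure_eq_map,
      List.map_map]
    simp only [Function.comp_def, Nat.cast_smul_eq_nsmul, nsmul_one]
  have hk : (k.factorial : ℚ) ≠ 0 := by positivity
  rw [hprod]
  convert Submodule.smul_of_tower_mem _ ((k.factorial : ℚ)⁻¹ ^ 2) hmem using 1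
  rw [smul_mul_smul_comm, smul_sub, ← Nat.cast_smul_eq_nsmul ℚ, smul_smul, sq, mul_assoc,
    inv_mul_cancel₀ hk, mul_one]
end

section
/- Let k ≥ 1 and n ≥ 3. Suppose δ = b_1α_1 + b_2α_2 + ⋯ + b_{n−1}α_{n−1} with k = b_1 ≥ b_2 ≥ ⋯ ≥ b_{n−1} ≥ 0 (integers). Then δ can be written as a sum of exactly k positive roots of A_{n−1}, each of the form α_1 + α_2 + ⋯ + α_{j−1} for some 2 ≤ j ≤ n. -/
lemma list_range_map_sum (N : ℕ) (f : ℕ → ℤ) :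
    ((List.range N).map f).sum = ∑ i ∈ Finset.range N, f i := by
  induction N with
  | zero => simp
  | succ N ih => rw [List.range_succ, Finset.sum_range_succ, List.map_append]; simp [ih]

lemma list_sum_apply {ι : Type*} (L : List (ι → ℤ)) (a : ι) :
    L.sum a = (L.map (fun f => f a)).sum := by
  induction L with
  | nil => simp
  | cons f t ih => simp [ih]

/-- If δ = b₁α₁ + ⋯ + b_{n−1}α_{n−1} with k = b₁ ≥ b₂ ≥ ⋯ ≥ b_{n−1} ≥ 0, then δ is a sum
of exactly k positive roots of A_{n−1}, each of the form α₁ + α₂ + ⋯ + α_{j−1}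
(2 ≤ j ≤ n).  The root lattice is modelled as ℤ^{n−1}, coordinate `a : Fin (n−1)` being
the coefficient of α_{a+1}. -/
theorem stmt_15 (n : ℕ) (hn : 3 ≤ n) (k : ℕ) (hk : 1 ≤ k) (δ : Fin (n - 1) → ℤ)
    (h1 : δ ⟨0, by omega⟩ = (k : ℤ))
    (hdec : ∀ a b : Fin (n - 1), a ≤ b → δ b ≤ δ a)
    (hnonneg : ∀ a, 0 ≤ δ a) :
    ∃ L : List (Fin (n - 1) → ℤ), L.length = k ∧
      (∀ β ∈ L, ∃ j : ℕ, 2 ≤ j ∧ j ≤ n ∧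
        β = fun a => if a.val + 1 ≤ j - 1 then 1 else 0) ∧
      L.sum = δ := by
  set g : ℕ → Fin (n - 1) → ℤ := fun i a => if (i : ℤ) + 1 ≤ δ a then 1 else 0 with hg
  set m : ℕ → ℕ := fun i =>
    (Finset.univ.filter (fun a : Fin (n - 1) => (i : ℤ) + 1 ≤ δ a)).card with hm
  have key : ∀ i < k, ∀ a : Fin (n - 1), ((i : ℤ) + 1 ≤ δ a ↔ a.val < m i) := by
    intro i hi a
    constructor
    · intro h
      have hsub : Finset.Iic a ⊆
          Finset.univ.filter (fun b : Fin (n - 1) => (i : ℤ) + 1 ≤ δ b) := by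
        intro b hb
        simp only [Finset.mem_Iic] at hb
        simp only [Finset.mem_filter, Finset.mem_univ, true_and]
        exact le_trans h (hdec b a hb)
      have := Finset.card_le_card hsub
      rw [Fin.card_Iic] at this
      simp only [hm]
      omega
    · intro h
      by_contra hc
      push_neg at hc
      have hsub : Finset.univ.filter (fun b : Fin (n - 1) => (i : ℤ) + 1 ≤ δ b) ⊆
          Finset.Iio a := by
        intro b hb
        simp only [Finset.mem_filter, Finset.mem_univ, true_and] at hb
        simp only [Finset.mem_Iio]
        by_contra hba
        push_neg at hba
        exact absurd (le_trans hb (hdec a b hba)) (not_le.mpr hc)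
      have := Finset.card_le_card hsub
      rw [Fin.card_Iio] at this
      simp only [hm] at h
      omega
  refine ⟨(List.range k).map g, by simp, ?_, ?_⟩
  · intro β hβ
    simp only [List.mem_map, List.mem_range] at hβ
    obtain ⟨i, hi, rfl⟩ := hβ
    refine ⟨m i + 1, ?_, ?_, ?_⟩
    · have h0 : (⟨0, by omega⟩ : Fin (n - 1)).val < m i := by
        rw [← key i hi, h1]
        exact_mod_cast hi
      omega
    · have : m i ≤ Fintype.card (Fin (n - 1)) := Finset.card_filter_le _ _
      simp at this
      omega
    · funext a
      simp only [hg, Nat.add_sub_cancel]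
      by_cases h : (i : ℤ) + 1 ≤ δ a
      · rw [if_pos h, if_pos (by have := (key i hi a).1 h; omega)]
      · rw [if_neg h, if_neg (by intro hc; exact h ((key i hi a).2 (by omega)))]
  · funext a
    rw [list_sum_apply, List.map_map]
    rw [Function.comp_def, list_range_map_sum]
    have hak : δ a ≤ (k : ℤ) := h1 ▸ hdec ⟨0, by omega⟩ a (Fin.mk_le_mk.mpr (Nat.zero_le _))
    have ha0 := hnonneg a
    simp only [hg]
    rw [Finset.sum_boole]
    have hfil : (Finset.range k).filter (fun i : ℕ => (i : ℤ) + 1 ≤ δ a)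
        = Finset.range (δ a).toNat := by
      ext i
      simp only [Finset.mem_filter, Finset.mem_range]
      omega
    rw [hfil, Finset.card_range]
    omega
end
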